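/- Let X be a compact Hausdorff space, E and F Banach spaces, and T : C(X,E) → F a bounded linear operator with representing measure G. If for every Borel subset B of X the operator G(B) : E → F is a (Grothendieck) integral operator and G is of bounded variation as a vector measure with values in I(E,F) under the integral norm (i.e. |G|_int(X) < ∞), then T is a (Grothendieck) integral operator; in fact ‖T‖_int ≤ |G|_int(X). -/

import Mathlib

open MeasureTheory Set

noncomputable section

namespace Paper

/-- The closed unit ball of the dual of `E`, equipped (as a subtype of `WeakDual ℝ E`)
with the weak-star topology. -/
abbrev DualBall (E : Type*) [NormedAddCommGroup E] [NormedSpace ℝ E] :=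
  {φ : WeakDual ℝ E // ‖WeakDual.toStrongDual φ‖ ≤ 1}

variable {Ω Z : Type*} [TopologicalSpace Ω]

/-- Borel subsets of a topological space. -/
def Borel' (Ω : Type*) [TopologicalSpace Ω] (A : Set Ω) : Prop :=
  MeasurableSet[borel Ω] A

/-- A finite partition of `A` into (pairwise disjoint) Borel pieces. -/
def IsBorelPartition (P : Finset (Set Ω)) (A : Set Ω) : Prop :=
  (∀ B ∈ P, Borel' Ω B) ∧ (P : Set (Set Ω)).PairwiseDisjoint id ∧
    ⋃₀ (P : Set (Set Ω)) = A

/-- The variation of a set function `m` on the set `A`, computed with respect to a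
"norm" gauge `ν` on the values: the supremum over all finite Borel partitions of `A`
of the sums of the gauges of the values of the pieces. -/
def variationWith (ν : Z → ENNReal) (m : Set Ω → Z) (A : Set Ω) : ENNReal :=
  ⨆ P : {P : Finset (Set Ω) // IsBorelPartition P A}, ∑ B ∈ P.1, ν (m B)

/-- The variation of a Banach-space valued set function. -/
def variation [NormedAddCommGroup Z] (m : Set Ω → Z) (A : Set Ω) : ENNReal :=
  variationWith (fun z => (‖z‖₊ : ENNReal)) m A

/-- `m` is a countably additive vector measure on the Borel σ-field of `Ω`
(it vanishes off the Borel sets and is σ-additive on them). -/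
def CountablyAdditive [NormedAddCommGroup Z] (m : Set Ω → Z) : Prop :=
  (∀ A : Set Ω, ¬ Borel' Ω A → m A = 0) ∧
  ∀ s : ℕ → Set Ω, (∀ n, Borel' Ω (s n)) → Pairwise (Function.onFun Disjoint s) →
    HasSum (fun n => m (s n)) (m (⋃ n, s n))

/-- Regularity of a vector measure: every Borel set can be approximated from inside by
compacts and from outside by and open sets, in variation. -/
def RegularVM [NormedAddCommGroup Z] (m : Set Ω → Z) : Prop :=
  ∀ A : Set Ω, Borel' Ω A → ∀ ε : ENNReal, 0 < ε →
    ∃ K U : Set Ω, IsCompact K ∧ K ⊆ A ∧ IsOpen U ∧ A ⊆ U ∧ variation m (U \ K) < ε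

/-- `IntegralEq μ φ r` says that the (real) countably additive Borel set function `μ`
has Jordan decomposition `μ = μp - μn` into finite positive Borel measures and that
`∫ φ dμ = ∫ φ dμp - ∫ φ dμn = r`. -/
def IntegralEq (μ : Set Ω → ℝ) (φ : Ω → ℝ) (r : ℝ) : Prop :=
  ∃ μp μn : @Measure Ω (borel Ω), IsFiniteMeasure μp ∧ IsFiniteMeasure μn ∧
    (∀ A : Set Ω, Borel' Ω A → μ A = (μp A).toReal - (μn A).toReal) ∧
    r = (∫ x, φ x ∂μp) - ∫ x, φ x ∂μn

section Operators

variable {E F : Type*} [NormedAddCommGroup E] [NormedSpace ℝ E]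
  [NormedAddCommGroup F] [NormedSpace ℝ F]

/-- The injective tensor norm of `∑ eᵢ ⊗ gᵢ` (given as a list of pairs):
`sup {|∑ φ(eᵢ) ψ(gᵢ)| : ‖φ‖ ≤ 1, ‖ψ‖ ≤ 1}`. -/
def epsNorm {E G : Type*} [NormedAddCommGroup E] [NormedSpace ℝ E]
    [NormedAddCommGroup G] [NormedSpace ℝ G] (p : List (E × G)) : ℝ :=
  sSup {r | ∃ (φ : E →L[ℝ] ℝ) (ψ : G →L[ℝ] ℝ), ‖φ‖ ≤ 1 ∧ ‖ψ‖ ≤ 1 ∧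
    r = |(p.map fun q => φ q.1 * ψ q.2).sum|}

/-- `C` is a bound witnessing that the bilinear form `(e, y*) ↦ y*(T e)` is bounded for
the injective tensor norm on `E ⊗ F*`, i.e. an integral bound for `T`. -/
def IntegralBound (T : E →L[ℝ] F) (C : ℝ) : Prop :=
  0 ≤ C ∧ ∀ p : List (E × (F →L[ℝ] ℝ)),
    |(p.map fun q => q.2 (T q.1)).sum| ≤ C * epsNorm p

/-- A (Grothendieck) integral operator: the bilinear form `(e, y*) ↦ y*(T e)` induces a
bounded linear functional on the injective tensor product `E ⊗̂_ε F*`. -/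
def IsIntegralOp (T : E →L[ℝ] F) : Prop := ∃ C, IntegralBound T C

/-- The integral norm `‖T‖_int` of an operator. -/
def intNorm (T : E →L[ℝ] F) : ℝ := sInf {C | IntegralBound T C}

/-- A nuclear representation of `T`: `T = ∑ aₙ(·) zₙ` with `∑ ‖aₙ‖ ‖zₙ‖ < ∞`. -/
def NuclearRep (T : E →L[ℝ] F) (a : ℕ → (E →L[ℝ] ℝ)) (z : ℕ → F) : Prop :=
  Summable (fun n => ‖a n‖ * ‖z n‖) ∧ ∀ x : E, HasSum (fun n => a n x • z n) (T x)

/-- A nuclear operator. -/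
def IsNuclearOp (T : E →L[ℝ] F) : Prop := ∃ a z, NuclearRep T a z

/-- The nuclear norm `‖T‖_nuc` of an operator. -/
def nucNorm (T : E →L[ℝ] F) : ℝ :=
  sInf {r | ∃ a z, NuclearRep T a z ∧ r = ∑' n, ‖a n‖ * ‖z n‖}

end Operators

section Representing

variable {X : Type*} [TopologicalSpace X] [CompactSpace X] [T2Space X]
variable {E F : Type*} [NormedAddCommGroup E] [NormedSpace ℝ E]
  [NormedAddCommGroup F] [NormedSpace ℝ F]

/-- The elementary tensor `u ⊗ e ∈ C(X, E)` for `u ∈ C(X)` and `e ∈ E`. -/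
def tens (u : C(X, ℝ)) (e : E) : C(X, E) :=
  ⟨fun x => u x • e, u.continuous.smul continuous_const⟩

/-- `G` is the representing measure of the bounded operator `T : C(X, E) → F`:
`G` is an `L(E, F**)`-valued set function on the Borel σ-field of `X` such that for every
`e ∈ E` and `y* ∈ F*` the scalar set function `B ↦ ⟨G(B)e, y*⟩` is a regular countably
additive Borel measure of bounded variation which represents the functional
`u ↦ y*(T(u ⊗ e))` on `C(X)`.  (This characterizes `G(B)e = T**(1_B ⊗ e)`.) -/
def Represents (T : C(X, E) →L[ℝ] F)
    (G : Set X → (E →L[ℝ] ((F →L[ℝ] ℝ) →L[ℝ] ℝ))) : Prop :=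
  (∀ A : Set X, ¬ Borel' X A → G A = 0) ∧
  ∀ (e : E) (y : F →L[ℝ] ℝ),
    CountablyAdditive (fun B => G B e y) ∧
    RegularVM (fun B => G B e y) ∧
    variation (fun B => G B e y) Set.univ < ⊤ ∧
    ∀ u : C(X, ℝ), IntegralEq (fun B => G B e y) (fun x => u x) (y (T (tens u e)))

end Representing


/-! ### Auxiliary lemmas for the proof of Statement 4 -/

section ListAux

private lemma list_map_congr {α β : Type*} (l : List α) (f g : α → β)
    (h : ∀ a ∈ l, f a = g a) : l.map f = l.map g := by
  induction l with
  | nil => rfl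
  | cons a l ih =>
    simp only [List.map_cons]
    rw [h a (by simp), ih fun x hx => h x (by simp [hx])]

private lemma list_sum_map_add {α : Type*} (l : List α) (f g : α → ℝ) :
    (l.map fun x => f x + g x).sum = (l.map f).sum + (l.map g).sum := by
  induction l with
  | nil => simp
  | cons a l ih => simp only [List.map_cons, List.sum_cons, ih]; ring

private lemma list_sum_map_mul_left {α : Type*} (l : List α) (c : ℝ) (f : α → ℝ) :
    (l.map fun x => c * f x).sum = c * (l.map f).sum := by
  induction l with
  | nil => simp
  | cons a l ih => simp only [List.map_cons, List.sum_cons, ih]; ring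

private lemma list_abs_sum_le {α : Type*} (l : List α) (f g : α → ℝ)
    (h : ∀ a ∈ l, |f a| ≤ g a) : |(l.map f).sum| ≤ (l.map g).sum := by
  induction l with
  | nil => simp
  | cons a l ih =>
    simp only [List.map_cons, List.sum_cons]
    exact (abs_add_le _ _).trans
      (add_le_add (h a (by simp)) (ih fun x hx => h x (by simp [hx])))

private lemma list_abs_sub_le {α : Type*} (l : List α) (f g h : α → ℝ)
    (hfg : ∀ a ∈ l, |f a - g a| ≤ h a) :
    |(l.map f).sum - (l.map g).sum| ≤ (l.map h).sum := by
  induction l with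
  | nil => simp
  | cons a l ih =>
    simp only [List.map_cons, List.sum_cons]
    have h1 := hfg a (by simp)
    have h2 := ih fun x hx => hfg x (by simp [hx])
    have heq : f a + (l.map f).sum - (g a + (l.map g).sum)
        = (f a - g a) + ((l.map f).sum - (l.map g).sum) := by ring
    rw [heq]
    exact (abs_add_le _ _).trans (add_le_add h1 h2)

private lemma list_sum_map_finset_sum {α β : Type*} (l : List α) (s : Finset β)
    (f : α → β → ℝ) :
    (l.map fun x => ∑ j ∈ s, f x j).sum = ∑ j ∈ s, (l.map fun x => f x j).sum := by
  induction l with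
  | nil => simp
  | cons a l ih => simp only [List.map_cons, List.sum_cons, ih, Finset.sum_add_distrib]

private lemma habs_sub (a b : ℝ) : |a - b| ≤ |a| + |b| := by
  simpa [sub_eq_add_neg, abs_neg] using abs_add_le a (-b)

private lemma frac_helper (c ε : ℝ) (hc : 0 ≤ c) (hε : 0 < ε) :
    c * (ε / (2 * (c + 1))) ≤ ε / 2 := by
  have hd : (0:ℝ) < 2 * (c + 1) := by linarith
  rw [show c * (ε / (2 * (c + 1))) = (c * ε) / (2 * (c + 1)) from by ring,
    div_le_div_iff₀ hd two_pos]
  nlinarith [mul_nonneg hc hε.le]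

end ListAux

section EpsAux

variable {E G : Type*} [NormedAddCommGroup E] [NormedSpace ℝ E]
  [NormedAddCommGroup G] [NormedSpace ℝ G]

private def epsSet (p : List (E × G)) : Set ℝ :=
  {r | ∃ (φ : E →L[ℝ] ℝ) (ψ : G →L[ℝ] ℝ), ‖φ‖ ≤ 1 ∧ ‖ψ‖ ≤ 1 ∧
    r = |(p.map fun q => φ q.1 * ψ q.2).sum|}

private lemma epsNorm_eq_sSup (p : List (E × G)) : epsNorm p = sSup (epsSet p) := rfl

private lemma zero_mem_epsSet (p : List (E × G)) : (0:ℝ) ∈ epsSet p := by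
  refine ⟨0, 0, by simp, by simp, ?_⟩
  rw [List.sum_eq_zero, abs_zero]
  rintro r hr
  obtain ⟨q, -, rfl⟩ := List.mem_map.1 hr
  simp

private lemma epsSet_bddAbove (p : List (E × G)) : BddAbove (epsSet p) := by
  refine ⟨(p.map fun q => ‖q.1‖ * ‖q.2‖).sum, ?_⟩
  rintro r ⟨φ, ψ, hφ, hψ, rfl⟩
  refine list_abs_sum_le _ _ _ fun q _ => ?_
  rw [abs_mul]
  have h1 : |φ q.1| ≤ ‖q.1‖ := by
    have := φ.le_opNorm q.1
    rw [Real.norm_eq_abs] at this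
    exact this.trans (mul_le_of_le_one_left (norm_nonneg _) hφ)
  have h2 : |ψ q.2| ≤ ‖q.2‖ := by
    have := ψ.le_opNorm q.2
    rw [Real.norm_eq_abs] at this
    exact this.trans (mul_le_of_le_one_left (norm_nonneg _) hψ)
  exact mul_le_mul h1 h2 (abs_nonneg _) (norm_nonneg _)

lemma epsNorm_nonneg (p : List (E × G)) : 0 ≤ epsNorm p :=
  le_csSup (epsSet_bddAbove p) (zero_mem_epsSet p)

lemma epsNorm_comp {E' : Type*} [NormedAddCommGroup E'] [NormedSpace ℝ E']
    (A : E →L[ℝ] E') (hA : ‖A‖ ≤ 1) (p : List (E × G)) :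
    epsNorm (p.map fun q => (A q.1, q.2)) ≤ epsNorm p := by
  rw [epsNorm_eq_sSup, epsNorm_eq_sSup]
  refine Real.sSup_le ?_ (epsNorm_nonneg p)
  rintro r ⟨φ, ψ, hφ, hψ, rfl⟩
  have hmap : ((p.map fun q => (A q.1, q.2)).map fun q => φ q.1 * ψ q.2)
      = p.map fun q => (φ.comp A) q.1 * ψ q.2 := by
    rw [List.map_map]; rfl
  rw [hmap]
  refine le_csSup (epsSet_bddAbove p) ⟨φ.comp A, ψ, ?_, hψ, rfl⟩
  refine (φ.opNorm_comp_le A).trans ?_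
  calc ‖φ‖ * ‖A‖ ≤ 1 * 1 := mul_le_mul hφ hA (norm_nonneg _) zero_le_one
  _ = 1 := one_mul 1

lemma epsNorm_perturb {α : Type*} (l : List α) (a b : α → E) (c : α → G) :
    epsNorm (l.map fun x => (a x, c x)) ≤
      epsNorm (l.map fun x => (b x, c x)) + (l.map fun x => ‖a x - b x‖ * ‖c x‖).sum := by
  rw [epsNorm_eq_sSup]
  refine Real.sSup_le ?_ (add_nonneg (epsNorm_nonneg _) (List.sum_nonneg ?_))
  · rintro r ⟨φ, ψ, hφ, hψ, rfl⟩
    have hmap : ((l.map fun x => (a x, c x)).map fun q => φ q.1 * ψ q.2)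
        = l.map fun x => φ (a x) * ψ (c x) := by
      rw [List.map_map]; rfl
    rw [hmap]
    have hsplit : (l.map fun x => φ (a x) * ψ (c x)).sum
        = (l.map fun x => φ (b x) * ψ (c x)).sum
          + (l.map fun x => (φ (a x) - φ (b x)) * ψ (c x)).sum := by
      rw [← list_sum_map_add]
      exact congrArg List.sum (list_map_congr _ _ _ fun x _ => by ring)
    rw [hsplit]
    refine (abs_add_le _ _).trans (add_le_add ?_ ?_)
    · have hmem : |(l.map fun x => φ (b x) * ψ (c x)).sum|
          ∈ epsSet (l.map fun x => (b x, c x)) := by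
        refine ⟨φ, ψ, hφ, hψ, ?_⟩
        rw [List.map_map]
        rfl
      exact le_csSup (epsSet_bddAbove _) hmem
    · refine list_abs_sum_le _ _ _ fun x _ => ?_
      rw [abs_mul]
      have h1 : |φ (a x) - φ (b x)| ≤ ‖a x - b x‖ := by
        rw [← map_sub]
        have := φ.le_opNorm (a x - b x)
        rw [Real.norm_eq_abs] at this
        exact this.trans (mul_le_of_le_one_left (norm_nonneg _) hφ)
      have h2 : |ψ (c x)| ≤ ‖c x‖ := by
        have := ψ.le_opNorm (c x)
        rw [Real.norm_eq_abs] at this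
        exact this.trans (mul_le_of_le_one_left (norm_nonneg _) hψ)
      exact mul_le_mul h1 h2 (abs_nonneg _) (norm_nonneg _)
  · rintro r hr
    obtain ⟨x, -, rfl⟩ := List.mem_map.1 hr
    exact mul_nonneg (norm_nonneg _) (norm_nonneg _)

end EpsAux

section IntAux

variable {E F : Type*} [NormedAddCommGroup E] [NormedSpace ℝ E]
  [NormedAddCommGroup F] [NormedSpace ℝ F]

lemma intNorm_nonneg (T : E →L[ℝ] F) : 0 ≤ intNorm T :=
  Real.sInf_nonneg fun _ hC => hC.1

lemma intNorm_zero : intNorm (0 : E →L[ℝ] F) = 0 := by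
  refine le_antisymm ?_ (intNorm_nonneg _)
  refine csInf_le ⟨0, fun C hC => hC.1⟩ ?_
  refine ⟨le_refl 0, fun p => ?_⟩
  have h0 : (p.map fun q => q.2 ((0 : E →L[ℝ] F) q.1)).sum = 0 := by
    rw [List.sum_eq_zero]
    rintro r hr
    obtain ⟨q, -, rfl⟩ := List.mem_map.1 hr
    simp
  rw [h0, abs_zero, zero_mul]

lemma integralBound_intNorm {T : E →L[ℝ] F} (h : IsIntegralOp T) :
    IntegralBound T (intNorm T) := by
  obtain ⟨C, hC⟩ := h
  refine ⟨intNorm_nonneg T, fun p => ?_⟩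
  rcases (epsNorm_nonneg p).lt_or_eq with hq | hq
  · rw [← div_le_iff₀ hq]
    refine le_csInf ⟨C, hC⟩ fun C' hC' => ?_
    rw [div_le_iff₀ hq]
    exact hC'.2 p
  · have h0 : |(p.map fun q => q.2 (T q.1)).sum| ≤ 0 := by
      have := hC.2 p
      rw [← hq, mul_zero] at this
      exact this
    calc |(p.map fun q => q.2 (T q.1)).sum| ≤ 0 := h0
    _ = intNorm T * epsNorm p := by rw [← hq, mul_zero]

end IntAux

section MeasAux

open MeasureTheory

/-- Riemann-sum approximation of the integral of a function of small oscillation on each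
piece of a finite Borel partition, against a finite measure. -/
private lemma integral_approx {X : Type*} [TopologicalSpace X] [CompactSpace X]
    [MeasurableSpace X] [OpensMeasurableSpace X]
    (ν : Measure X) [IsFiniteMeasure ν] (u : C(X, ℝ)) {κ : Type*} [Fintype κ]
    (B : κ → Set X) (hmeas : ∀ k, MeasurableSet (B k))
    (hdisj : Pairwise (Function.onFun Disjoint B))
    (hcov : (⋃ k, B k) = Set.univ)
    (t : κ → X) (htmem : ∀ k, (B k).Nonempty → t k ∈ B k)
    {η : ℝ} (hη : 0 ≤ η)
    (hosc : ∀ k, ∀ x ∈ B k, ∀ y ∈ B k, |u x - u y| ≤ η) :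
    |(∫ x, u x ∂ν) - ∑ k, u (t k) * (ν (B k)).toReal| ≤ η * (ν Set.univ).toReal := by
  have hcs : HasCompactSupport (fun x => u x) :=
    IsCompact.of_isClosed_subset isCompact_univ (isClosed_tsupport _) (Set.subset_univ _)
  have hint : Integrable (fun x => u x) ν :=
    u.continuous.integrable_of_hasCompactSupport hcs
  have hsplit : (∫ x, u x ∂ν) = ∑ k, ∫ x in B k, u x ∂ν := by
    rw [← MeasureTheory.setIntegral_univ (f := fun x => u x), ← hcov,
      MeasureTheory.integral_iUnion hmeas hdisj (by rw [hcov]; exact hint.integrableOn),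
      tsum_fintype]
  have hμsplit : (ν Set.univ).toReal = ∑ k, (ν (B k)).toReal := by
    rw [← hcov, measure_iUnion hdisj hmeas, tsum_fintype,
      ENNReal.toReal_sum fun k _ => measure_ne_top ν _]
  rw [hsplit, ← Finset.sum_sub_distrib]
  refine (Finset.abs_sum_le_sum_abs _ _).trans ?_
  rw [hμsplit, Finset.mul_sum]
  refine Finset.sum_le_sum fun k _ => ?_
  rcases Set.eq_empty_or_nonempty (B k) with h | h
  · simp [h]
  · have htk := htmem k h
    have hconst : u (t k) * (ν (B k)).toReal = ∫ _ in B k, u (t k) ∂ν := by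
      rw [setIntegral_const, smul_eq_mul, mul_comm]; rfl
    rw [hconst, ← MeasureTheory.integral_sub hint.integrableOn
      (integrable_const _).integrableOn]
    have hb : ∀ x ∈ B k, ‖u x - u (t k)‖ ≤ η := fun x hx => by
      rw [Real.norm_eq_abs]; exact hosc k x hx (t k) htk
    have := norm_setIntegral_le_of_norm_le_const (μ := ν) (s := B k)
      (measure_lt_top ν (B k)) hb
    rw [Real.norm_eq_abs] at this
    exact this

end MeasAux

section VarAux

variable {X : Type*} [TopologicalSpace X]
variable {E F : Type*} [NormedAddCommGroup E] [NormedSpace ℝ E]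
  [NormedAddCommGroup F] [NormedSpace ℝ F]

private lemma sum_intNorm_le (S : Set X → (E →L[ℝ] F)) (hSempty : S ∅ = 0)
    {κ : Type*} [Fintype κ] (B : κ → Set X) (hmeas : ∀ k, Borel' X (B k))
    (hdisj : Pairwise (Function.onFun Disjoint B))
    (hcov : (⋃ k, B k) = Set.univ) :
    ENNReal.ofReal (∑ k, intNorm (S (B k))) ≤
      variationWith (fun U => ENNReal.ofReal (intNorm U)) S Set.univ := by
  classical
  set P : Finset (Set X) := Finset.image B (Finset.univ.filter fun k => (B k).Nonempty)
    with hP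
  have hPpart : IsBorelPartition P Set.univ := by
    refine ⟨?_, ?_, ?_⟩
    · intro A hA
      obtain ⟨k, -, rfl⟩ := Finset.mem_image.1 hA
      exact hmeas k
    · intro A hA A' hA' hne
      obtain ⟨k, -, rfl⟩ := Finset.mem_image.1 (Finset.mem_coe.1 hA)
      obtain ⟨k', -, rfl⟩ := Finset.mem_image.1 (Finset.mem_coe.1 hA')
      exact hdisj fun h => hne (by rw [h])
    · ext x
      simp only [Set.mem_sUnion, Set.mem_univ, iff_true]
      obtain ⟨k, hk⟩ := Set.mem_iUnion.1 (hcov ▸ Set.mem_univ x)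
      exact ⟨B k, Finset.mem_coe.2 (Finset.mem_image.2
        ⟨k, Finset.mem_filter.2 ⟨Finset.mem_univ k, ⟨x, hk⟩⟩, rfl⟩), hk⟩
  have hinj : ∀ k ∈ Finset.univ.filter (fun k => (B k).Nonempty),
      ∀ k' ∈ Finset.univ.filter (fun k => (B k).Nonempty), B k = B k' → k = k' := by
    intro k hk k' hk' h
    by_contra hne
    have hd := hdisj hne
    rw [Function.onFun, h] at hd
    have := disjoint_self.1 hd
    exact absurd this (Set.nonempty_iff_ne_empty.1 (Finset.mem_filter.1 hk').2)
  have hsum : ∑ k, intNorm (S (B k)) = ∑ A ∈ P, intNorm (S A) := by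
    rw [hP, Finset.sum_image hinj]
    rw [← Finset.sum_filter_add_sum_filter_not Finset.univ (fun k => (B k).Nonempty)
      (fun k => intNorm (S (B k)))]
    have h0 : ∑ k ∈ Finset.univ.filter (fun k => ¬ (B k).Nonempty),
        intNorm (S (B k)) = 0 :=
      Finset.sum_eq_zero fun k hk => by
        rw [Set.not_nonempty_iff_eq_empty.1 (Finset.mem_filter.1 hk).2, hSempty,
          intNorm_zero]
    rw [h0, add_zero]
  calc ENNReal.ofReal (∑ k, intNorm (S (B k)))
      = ∑ A ∈ P, ENNReal.ofReal (intNorm (S A)) := by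
        rw [hsum, ENNReal.ofReal_sum_of_nonneg fun A _ => intNorm_nonneg _]
  _ ≤ variationWith (fun U => ENNReal.ofReal (intNorm U)) S Set.univ :=
      le_iSup (fun P' : {P' : Finset (Set X) // IsBorelPartition P' Set.univ} =>
        ∑ A ∈ P'.1, ENNReal.ofReal (intNorm (S A))) ⟨P, hPpart⟩

end VarAux
set_option maxHeartbeats 4000000 in
/-- Let `T : C(X,E) → F` be a bounded operator with representing
measure `G`.  If for each Borel `B ⊆ X` the operator `G(B)` maps `E` into `F` (via a
bounded operator `S B` with `y*((S B) e) = (G B e)(y*)`) and is a (Grothendieck)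
integral operator, and `G` is of bounded variation as a vector measure valued in
`I(E,F)` with the integral norm, then `T` is integral and `‖T‖_int ≤ |G|_int(X)`. -/
theorem statement4 {X : Type*} [TopologicalSpace X] [CompactSpace X] [T2Space X]
    {E F : Type*}
    [NormedAddCommGroup E] [NormedSpace ℝ E] [CompleteSpace E]
    [NormedAddCommGroup F] [NormedSpace ℝ F] [CompleteSpace F]
    (T : C(X, E) →L[ℝ] F)
    (G : Set X → (E →L[ℝ] ((F →L[ℝ] ℝ) →L[ℝ] ℝ)))
    (hG : Represents T G)
    (S : Set X → (E →L[ℝ] F))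
    (hSG : ∀ B : Set X, Borel' X B → ∀ (e : E) (y : F →L[ℝ] ℝ), y (S B e) = G B e y)
    (hSint : ∀ B : Set X, Borel' X B → IsIntegralOp (S B))
    (hbv : variationWith (fun U => ENNReal.ofReal (intNorm U)) S Set.univ < ⊤) :
    IsIntegralOp T ∧
      ENNReal.ofReal (intNorm T) ≤
        variationWith (fun U => ENNReal.ofReal (intNorm U)) S Set.univ := by
  classical
  letI : MeasurableSpace X := borel X
  haveI : BorelSpace X := ⟨rfl⟩
  set V := variationWith (fun U => ENNReal.ofReal (intNorm U)) S Set.univ with hVdef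
  have hVne : V ≠ ⊤ := hbv.ne
  set Vr := V.toReal with hVrdef
  have hVr0 : 0 ≤ Vr := ENNReal.toReal_nonneg
  -- `G ∅ = 0` and `S ∅ = 0`
  have hGempty : ∀ (e : E) (y : F →L[ℝ] ℝ), G ∅ e y = 0 := by
    intro e y
    have hpair : Pairwise (Function.onFun Disjoint fun _ : ℕ => (∅ : Set X)) := by
      intro i j _
      exact disjoint_bot_left
    have h := (hG.2 e y).1.2 (fun _ => (∅ : Set X)) (fun _ => MeasurableSet.empty) hpair
    have h2 := h.summable.tendsto_atTop_zero
    exact tendsto_nhds_unique tendsto_const_nhds h2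
  have hSempty : S ∅ = 0 := by
    ext e
    have : ∀ y : F →L[ℝ] ℝ, y (S ∅ e) = 0 := fun y => by
      rw [hSG ∅ MeasurableSet.empty e y, hGempty]
    have h0 : S ∅ e = 0 := NormedSpace.eq_zero_of_forall_dual_eq_zero ℝ this
    simpa using h0
  -- integral bound for each `S B`
  have hbound : ∀ B : Set X, Borel' X B → IntegralBound (S B) (intNorm (S B)) :=
    fun B hB => integralBound_intNorm (hSint B hB)
  -- it suffices to prove the integral bound for `T` with constant `Vr`
  suffices hTb : IntegralBound T Vr by
    refine ⟨⟨Vr, hTb⟩, ?_⟩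
    have h1 : intNorm T ≤ Vr := csInf_le ⟨0, fun C hC => hC.1⟩ hTb
    calc ENNReal.ofReal (intNorm T) ≤ ENNReal.ofReal Vr := ENNReal.ofReal_le_ofReal h1
    _ = V := ENNReal.ofReal_toReal hVne
  refine ⟨hVr0, fun p => ?_⟩
  -- trivial case: empty space
  rcases isEmpty_or_nonempty X with hX | hX
  · have h0 : (p.map fun q => q.2 (T q.1)).sum = 0 := by
      rw [List.sum_eq_zero]
      rintro r hr
      obtain ⟨q, -, rfl⟩ := List.mem_map.1 hr
      have hq1 : q.1 = 0 := by
        ext x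
        exact isEmptyElim x
      rw [hq1]
      simp
    rw [h0, abs_zero]
    exact mul_nonneg hVr0 (epsNorm_nonneg p)
  -- main case
  set Y := (p.map fun q => ‖q.2‖).sum with hYdef
  have hY0 : 0 ≤ Y := by
    rw [hYdef]
    refine List.sum_nonneg ?_
    rintro r hr
    obtain ⟨q, -, rfl⟩ := List.mem_map.1 hr
    exact norm_nonneg _
  refine le_of_forall_pos_le_add fun ε hε => ?_
  have hTY0 : 0 ≤ ‖T‖ * Y := mul_nonneg (norm_nonneg _) hY0
  have hVY0 : 0 ≤ Vr * Y := mul_nonneg hVr0 hY0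
  set δ := ε / (2 * (‖T‖ * Y + Vr * Y + 1)) with hδdef
  have hδ0 : 0 < δ := by
    rw [hδdef]
    exact div_pos hε (by linarith)
  -- a finite cover of `X` by sets on which every `q.1` oscillates at most `δ`
  set V0 : X → Set X := fun x => ⋂ q ∈ p.toFinset, {x' | ‖q.1 x' - q.1 x‖ < δ} with hV0def
  have hV0open : ∀ x, IsOpen (V0 x) := by
    intro x
    refine isOpen_biInter_finset fun q _ => ?_
    have hcont : Continuous fun x' => ‖q.1 x' - q.1 x‖ :=
      ((map_continuous q.1).sub continuous_const).norm
    exact isOpen_Iio.preimage hcont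
  have hV0mem : ∀ x, x ∈ V0 x := by
    intro x
    refine Set.mem_iInter₂.2 fun q _ => ?_
    simp only [Set.mem_setOf_eq, sub_self, norm_zero]
    exact hδ0
  obtain ⟨s, hs⟩ := isCompact_univ.elim_finite_subcover V0 hV0open
    (fun x _ => Set.mem_iUnion.2 ⟨x, hV0mem x⟩)
  -- a partition of unity subordinated to this cover
  have hcov' : (Set.univ : Set X) ⊆ ⋃ j : {x // x ∈ s}, V0 j.1 := by
    intro x hx
    obtain ⟨y, hy, hxy⟩ := Set.mem_iUnion₂.1 (hs hx)
    exact Set.mem_iUnion.2 ⟨⟨y, hy⟩, hxy⟩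
  obtain ⟨w, hw⟩ := PartitionOfUnity.exists_isSubordinate isClosed_univ
    (fun j : {x // x ∈ s} => V0 j.1) (fun j => hV0open j.1) hcov'
  have hwsum : ∀ x : X, ∑ j : {x // x ∈ s}, w j x = 1 := by
    intro x
    rw [← finsum_eq_sum_of_fintype]
    exact w.sum_eq_one (Set.mem_univ x)
  have hwnn : ∀ (j : {x // x ∈ s}) (x : X), 0 ≤ w j x := fun j x => w.nonneg j x
  -- the approximating map `gC`
  obtain ⟨gC, hgCsum, hgCapply⟩ :
      ∃ gC : C(X, E) → C(X, E),
        (∀ f : C(X, E), gC f = ∑ j : {x // x ∈ s}, tens (w j) (f j.1)) ∧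
        ∀ (f : C(X, E)) (x : X), gC f x = ∑ j : {x // x ∈ s}, w j x • f j.1 := by
    refine ⟨fun f => ∑ j : {x // x ∈ s}, tens (w j) (f j.1), fun f => rfl, ?_⟩
    intro f x
    simp [tens]
  have hfg : ∀ q ∈ p, ∀ x : X, ‖q.1 x - gC q.1 x‖ ≤ δ := by
    intro q hq x
    have h1 : q.1 x - gC q.1 x = ∑ j : {x // x ∈ s}, w j x • (q.1 x - q.1 j.1) := by
      rw [hgCapply]
      have h2 : q.1 x = ∑ j : {x // x ∈ s}, w j x • q.1 x := by
        rw [← Finset.sum_smul, hwsum, one_smul]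
      calc q.1 x - ∑ j : {x // x ∈ s}, w j x • q.1 j.1
          = (∑ j : {x // x ∈ s}, w j x • q.1 x)
            - ∑ j : {x // x ∈ s}, w j x • q.1 j.1 := by rw [← h2]
      _ = ∑ j : {x // x ∈ s}, w j x • (q.1 x - q.1 j.1) := by
          rw [← Finset.sum_sub_distrib]
          exact Finset.sum_congr rfl fun j _ => (smul_sub _ _ _).symm
    rw [h1]
    refine (norm_sum_le _ _).trans ?_
    have hterm : ∀ j ∈ (Finset.univ : Finset {x // x ∈ s}),
        ‖w j x • (q.1 x - q.1 j.1)‖ ≤ w j x * δ := by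
      intro j _
      rw [norm_smul, Real.norm_eq_abs, abs_of_nonneg (hwnn j x)]
      rcases eq_or_ne (w j x) 0 with h | h
      · simp [h]
      · have hx : x ∈ V0 j.1 := hw j (subset_tsupport _ (Function.mem_support.2 h))
        have hlt := Set.mem_iInter₂.1 hx q (List.mem_toFinset.2 hq)
        exact mul_le_mul_of_nonneg_left (le_of_lt hlt) (hwnn j x)
    refine (Finset.sum_le_sum hterm).trans ?_
    rw [← Finset.sum_mul, hwsum, one_mul]
  have hfgnorm : ∀ q ∈ p, ‖q.1 - gC q.1‖ ≤ δ := by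
    intro q hq
    refine (ContinuousMap.norm_le _ hδ0.le).2 fun x => ?_
    simpa using hfg q hq x
  clear_value V0
  -- measures representing the scalar measures of `G`
  have key : ∀ (e : E) (y : F →L[ℝ] ℝ) (u : C(X, ℝ)),
      ∃ μp μn : Measure X, IsFiniteMeasure μp ∧ IsFiniteMeasure μn ∧
        (∀ A : Set X, Borel' X A → G A e y = (μp A).toReal - (μn A).toReal) ∧
        y (T (tens u e)) = (∫ x, u x ∂μp) - ∫ x, u x ∂μn := by
    intro e y u
    obtain ⟨μp, μn, h1, h2, h3, h4⟩ := (hG.2 e y).2.2.2 u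
    exact ⟨μp, μn, h1, h2, h3, h4⟩
  obtain ⟨Pm, Nm, hspec⟩ :
      ∃ Pm Nm : (C(X, E) × (F →L[ℝ] ℝ)) → {x // x ∈ s} → Measure X,
        ∀ (q : C(X, E) × (F →L[ℝ] ℝ)) (j : {x // x ∈ s}),
          IsFiniteMeasure (Pm q j) ∧ IsFiniteMeasure (Nm q j) ∧
          (∀ A : Set X, Borel' X A →
            G A (q.1 j.1) q.2 = ((Pm q j) A).toReal - ((Nm q j) A).toReal) ∧
          q.2 (T (tens (w j) (q.1 j.1)))
            = (∫ x, w j x ∂(Pm q j)) - ∫ x, w j x ∂(Nm q j) :=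
    ⟨fun q j => (key (q.1 j.1) q.2 (w j)).choose,
     fun q j => ((key (q.1 j.1) q.2 (w j)).choose_spec).choose,
     fun q j => ((key (q.1 j.1) q.2 (w j)).choose_spec).choose_spec⟩
  -- total mass and the fine parameter η
  set M := (p.map fun q => ∑ j : {x // x ∈ s},
    (((Pm q j) Set.univ).toReal + ((Nm q j) Set.univ).toReal)).sum with hMdef
  have hM0 : 0 ≤ M := by
    rw [hMdef]
    refine List.sum_nonneg ?_
    rintro r hr
    obtain ⟨q, -, rfl⟩ := List.mem_map.1 hr
    exact Finset.sum_nonneg fun j _ => add_nonneg ENNReal.toReal_nonneg ENNReal.toReal_nonneg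
  set η := ε / (2 * (M + 1)) with hηdef
  have hη0 : 0 < η := by
    rw [hηdef]
    exact div_pos hε (by linarith)
  -- a Borel partition on whose pieces each `w j` oscillates at most `η`
  set m : ℕ := ⌈2 / η⌉₊ with hmdef
  have hm1 : 1 / η < (m : ℝ) := by
    have h1 : (2:ℝ) / η ≤ m := Nat.le_ceil _
    have h2 : (1:ℝ) / η < 2 / η := by
      rw [div_lt_div_iff₀ hη0 hη0]
      nlinarith [hη0]
    linarith
  set B : ({x // x ∈ s} → Fin m) → Set X := fun k =>
    ⋂ j, (w j) ⁻¹' Set.Ico (((k j : ℕ) : ℝ) * η) ((((k j : ℕ) : ℝ) + 1) * η) with hBdef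
  have hBmeas : ∀ k, MeasurableSet (B k) := by
    intro k
    rw [hBdef]
    exact MeasurableSet.iInter fun j => (w j).continuous.measurable measurableSet_Ico
  have hBdisj : Pairwise (Function.onFun Disjoint B) := by
    intro k k' hkk'
    obtain ⟨j, hj⟩ : ∃ j, k j ≠ k' j := by
      by_contra h
      push_neg at h
      exact hkk' (funext h)
    have hj' : ((k j : ℕ) : ℝ) ≠ ((k' j : ℕ) : ℝ) := by
      exact_mod_cast fun h => hj (Fin.ext h)
    refine Set.disjoint_left.2 fun x hx hx' => ?_
    rw [hBdef] at hx hx'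
    have h1 := Set.mem_Ico.1 (Set.mem_iInter.1 hx j)
    have h2 := Set.mem_Ico.1 (Set.mem_iInter.1 hx' j)
    have hne : (k j : ℕ) ≠ (k' j : ℕ) := fun h => hj (Fin.ext h)
    rcases hne.lt_or_gt with h | h
    · have hle : (((k j : ℕ) : ℝ) + 1) * η ≤ ((k' j : ℕ) : ℝ) * η := by
        refine mul_le_mul_of_nonneg_right ?_ hη0.le
        exact_mod_cast Nat.succ_le_of_lt h
      linarith [h1.2, h2.1]
    · have hle : (((k' j : ℕ) : ℝ) + 1) * η ≤ ((k j : ℕ) : ℝ) * η := by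
        refine mul_le_mul_of_nonneg_right ?_ hη0.le
        exact_mod_cast Nat.succ_le_of_lt h
      linarith [h1.1, h2.2]
  have hw1 : ∀ (j : {x // x ∈ s}) (x : X), w j x ≤ 1 := by
    intro j x
    refine (Finset.single_le_sum (fun i _ => hwnn i x) (Finset.mem_univ j)).trans ?_
    rw [hwsum]
  have hBcov : (⋃ k, B k) = Set.univ := by
    refine Set.eq_univ_of_forall fun x => ?_
    have hkx : ∀ j : {x // x ∈ s}, ⌊(w j x) / η⌋₊ < m := by
      intro j
      have hfl : (⌊(w j x) / η⌋₊ : ℝ) < (m : ℝ) := by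
        have h1 : (⌊(w j x) / η⌋₊ : ℝ) ≤ (w j x) / η := Nat.floor_le (div_nonneg (hwnn j x) hη0.le)
        have h2 : (w j x) / η ≤ 1 / η := by
          rw [div_le_div_iff₀ hη0 hη0]
          nlinarith [hw1 j x, hη0]
        linarith [hm1]
      exact_mod_cast hfl
    refine Set.mem_iUnion.2 ⟨fun j => ⟨⌊(w j x) / η⌋₊, hkx j⟩, ?_⟩
    rw [hBdef]
    refine Set.mem_iInter.2 fun j => ?_
    simp only [Set.mem_preimage, Set.mem_Ico]
    constructor
    · have h1 : (⌊(w j x) / η⌋₊ : ℝ) ≤ (w j x) / η := Nat.floor_le (div_nonneg (hwnn j x) hη0.le)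
      calc (⌊(w j x) / η⌋₊ : ℝ) * η ≤ ((w j x) / η) * η :=
            mul_le_mul_of_nonneg_right h1 hη0.le
      _ = w j x := div_mul_cancel₀ _ hη0.ne'
    · have h1 : (w j x) / η < (⌊(w j x) / η⌋₊ : ℝ) + 1 := Nat.lt_floor_add_one _
      calc w j x = ((w j x) / η) * η := (div_mul_cancel₀ _ hη0.ne').symm
      _ < ((⌊(w j x) / η⌋₊ : ℝ) + 1) * η := mul_lt_mul_of_pos_right h1 hη0
  have hBosc : ∀ (j : {x // x ∈ s}) (k), ∀ x ∈ B k, ∀ y ∈ B k, |w j x - w j y| ≤ η := by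
    intro j k x hx y hy
    rw [hBdef] at hx hy
    have h1 := Set.mem_Ico.1 (Set.mem_iInter.1 hx j)
    have h2 := Set.mem_Ico.1 (Set.mem_iInter.1 hy j)
    have hexp : (((k j : ℕ) : ℝ) + 1) * η = ((k j : ℕ) : ℝ) * η + η := by ring
    rw [hexp] at h1 h2
    rw [abs_sub_le_iff]
    constructor <;> linarith [h1.1, h1.2, h2.1, h2.2]
  clear_value B
  -- choice of tag points
  haveI : Nonempty X := hX
  set t : ({x // x ∈ s} → Fin m) → X := fun k =>
    if h : (B k).Nonempty then h.choose else Classical.arbitrary X with htdef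
  have htmem : ∀ k, (B k).Nonempty → t k ∈ B k := by
    intro k h
    simp only [htdef]
    rw [dif_pos h]
    exact h.choose_spec
  clear_value t
  -- the comparison of the Riemann sums with `q.2 (T (tens (w j) (q.1 j.1)))`
  have hrs : ∀ q ∈ p, ∀ j : {x // x ∈ s},
      |q.2 (T (tens (w j) (q.1 j.1)))
        - ∑ k, w j (t k) * G (B k) (q.1 j.1) q.2|
        ≤ η * (((Pm q j) Set.univ).toReal + ((Nm q j) Set.univ).toReal) := by
    intro q _ j
    obtain ⟨hf1, hf2, h3, h4⟩ := hspec q j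
    haveI := hf1
    haveI := hf2
    have e1 := integral_approx (Pm q j) (w j) B hBmeas hBdisj hBcov t htmem hη0.le
      (fun k x hx y hy => hBosc j k x hx y hy)
    have e2 := integral_approx (Nm q j) (w j) B hBmeas hBdisj hBcov t htmem hη0.le
      (fun k x hx y hy => hBosc j k x hx y hy)
    have hs' : ∑ k, w j (t k) * G (B k) (q.1 j.1) q.2
        = (∑ k, w j (t k) * ((Pm q j) (B k)).toReal)
          - ∑ k, w j (t k) * ((Nm q j) (B k)).toReal := by
      rw [← Finset.sum_sub_distrib]
      exact Finset.sum_congr rfl fun k _ => by rw [h3 (B k) (hBmeas k)]; ring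
    rw [h4, hs']
    have hring : (∫ x, w j x ∂(Pm q j)) - (∫ x, w j x ∂(Nm q j))
        - ((∑ k, w j (t k) * ((Pm q j) (B k)).toReal)
          - ∑ k, w j (t k) * ((Nm q j) (B k)).toReal)
        = ((∫ x, w j x ∂(Pm q j)) - ∑ k, w j (t k) * ((Pm q j) (B k)).toReal)
          - ((∫ x, w j x ∂(Nm q j)) - ∑ k, w j (t k) * ((Nm q j) (B k)).toReal) := by
      ring
    rw [hring]
    refine (habs_sub _ _).trans ?_
    calc |(∫ x, w j x ∂(Pm q j)) - ∑ k, w j (t k) * ((Pm q j) (B k)).toReal|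
          + |(∫ x, w j x ∂(Nm q j)) - ∑ k, w j (t k) * ((Nm q j) (B k)).toReal|
        ≤ η * ((Pm q j) Set.univ).toReal + η * ((Nm q j) Set.univ).toReal :=
          add_le_add e1 e2
    _ = η * (((Pm q j) Set.univ).toReal + ((Nm q j) Set.univ).toReal) := by ring
  -- expansion of `q.2 (T (gC q.1))`
  have hexp1 : ∀ q : C(X, E) × (F →L[ℝ] ℝ),
      q.2 (T (gC q.1)) = ∑ j : {x // x ∈ s}, q.2 (T (tens (w j) (q.1 j.1))) := by
    intro q
    simp only [hgCsum, map_sum]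
  -- the exchange identity
  have hswap : ∀ q : C(X, E) × (F →L[ℝ] ℝ),
      (∑ j : {x // x ∈ s}, ∑ k, w j (t k) * G (B k) (q.1 j.1) q.2)
        = ∑ k, q.2 (S (B k) (gC q.1 (t k))) := by
    intro q
    rw [Finset.sum_comm]
    refine Finset.sum_congr rfl fun k _ => ?_
    have h1 : ∀ j : {x // x ∈ s},
        w j (t k) * G (B k) (q.1 j.1) q.2 = w j (t k) * q.2 (S (B k) (q.1 j.1)) :=
      fun j => by rw [hSG (B k) (hBmeas k) (q.1 j.1) q.2]
    rw [Finset.sum_congr rfl fun j _ => h1 j]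
    have h2 : q.2 (S (B k) (gC q.1 (t k)))
        = ∑ j : {x // x ∈ s}, w j (t k) * q.2 (S (B k) (q.1 j.1)) := by
      rw [hgCapply]
      simp [map_sum, _root_.map_smul, smul_eq_mul]
    rw [h2]
  -- step 1 : |A0 - A1| ≤ ‖T‖ * Y * δ
  have hA01 : |(p.map fun q => q.2 (T q.1)).sum
      - (p.map fun q => q.2 (T (gC q.1))).sum| ≤ ‖T‖ * Y * δ := by
    refine (list_abs_sub_le p _ _ (fun q => ‖q.2‖ * (‖T‖ * δ)) ?_).trans ?_
    · intro q hq
      have heq : q.2 (T q.1) - q.2 (T (gC q.1)) = q.2 (T (q.1 - gC q.1)) := by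
        rw [map_sub, map_sub]
      rw [heq]
      have h1 := q.2.le_opNorm (T (q.1 - gC q.1))
      rw [Real.norm_eq_abs] at h1
      have h2 := T.le_opNorm (q.1 - gC q.1)
      have h3 := hfgnorm q hq
      calc |q.2 (T (q.1 - gC q.1))| ≤ ‖q.2‖ * ‖T (q.1 - gC q.1)‖ := h1
      _ ≤ ‖q.2‖ * (‖T‖ * ‖q.1 - gC q.1‖) :=
          mul_le_mul_of_nonneg_left h2 (norm_nonneg _)
      _ ≤ ‖q.2‖ * (‖T‖ * δ) :=
          mul_le_mul_of_nonneg_left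
            (mul_le_mul_of_nonneg_left h3 (norm_nonneg _)) (norm_nonneg _)
    · have hmc : (p.map fun q => ‖q.2‖ * (‖T‖ * δ)).sum
          = (p.map fun q => (‖T‖ * δ) * ‖q.2‖).sum :=
        congrArg List.sum (list_map_congr _ _ _ fun q _ => by ring)
      rw [hmc, list_sum_map_mul_left, ← hYdef]
      exact le_of_eq (by ring)
  -- step 2 : |A1 - A2| ≤ η * M
  have hA12 : |(p.map fun q => q.2 (T (gC q.1))).sum
      - (p.map fun q => ∑ j : {x // x ∈ s},
          ∑ k, w j (t k) * G (B k) (q.1 j.1) q.2).sum| ≤ η * M := by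
    refine (list_abs_sub_le p _ _ (fun q => η * ∑ j : {x // x ∈ s},
      (((Pm q j) Set.univ).toReal + ((Nm q j) Set.univ).toReal)) ?_).trans ?_
    · intro q hq
      rw [hexp1 q, ← Finset.sum_sub_distrib]
      refine (Finset.abs_sum_le_sum_abs _ _).trans ?_
      refine (Finset.sum_le_sum fun j _ => hrs q hq j).trans ?_
      exact le_of_eq (Finset.mul_sum _ _ _).symm
    · rw [list_sum_map_mul_left, ← hMdef]
  -- step 3 : |A2| ≤ Vr * (epsNorm p + δ * Y)
  have hA2eq : (p.map fun q => ∑ j : {x // x ∈ s},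
      ∑ k, w j (t k) * G (B k) (q.1 j.1) q.2).sum
      = ∑ k, (p.map fun q => q.2 (S (B k) (gC q.1 (t k)))).sum := by
    rw [list_map_congr p _ _ fun q _ => hswap q, list_sum_map_finset_sum]
  have hVsum : ∑ k, intNorm (S (B k)) ≤ Vr := by
    have h := sum_intNorm_le S hSempty B (fun k => hBmeas k) hBdisj hBcov
    rw [← hVdef] at h
    exact (ENNReal.ofReal_le_iff_le_toReal hVne).1 h
  have hAk : ∀ k, |(p.map fun q => q.2 (S (B k) (gC q.1 (t k)))).sum|
      ≤ intNorm (S (B k)) * (epsNorm p + δ * Y) := by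
    intro k
    have hb := hbound (B k) (hBmeas k)
    have h1 : |(p.map fun q => q.2 (S (B k) (gC q.1 (t k)))).sum|
        ≤ intNorm (S (B k)) * epsNorm (p.map fun q => (gC q.1 (t k), q.2)) := by
      have h := hb.2 (p.map fun q => (gC q.1 (t k), q.2))
      have hmm : ((p.map fun q => (gC q.1 (t k), q.2)).map fun q => q.2 (S (B k) q.1))
          = p.map fun q => q.2 (S (B k) (gC q.1 (t k))) := by
        rw [List.map_map]
        rfl
      rw [hmm] at h
      exact h
    refine h1.trans (mul_le_mul_of_nonneg_left ?_ (intNorm_nonneg _))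
    have h2 := epsNorm_perturb p (fun q => gC q.1 (t k)) (fun q => q.1 (t k))
      (fun q => q.2)
    have h3 : epsNorm (p.map fun q => (q.1 (t k), q.2)) ≤ epsNorm p := by
      set ev : C(X, E) →L[ℝ] E := ContinuousMap.evalCLM ℝ (t k) with hevdef
      have hA : ‖ev‖ ≤ 1 :=
        ContinuousLinearMap.opNorm_le_bound _ zero_le_one fun f => by
          rw [one_mul]
          exact f.norm_coe_le_norm (t k)
      have hcomp := epsNorm_comp ev hA p
      have hmm2 : (p.map fun q => (ev q.1, q.2)) = p.map fun q => (q.1 (t k), q.2) :=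
        list_map_congr _ _ _ fun q _ => rfl
      rw [hmm2] at hcomp
      exact hcomp
    have h4 : (p.map fun q => ‖gC q.1 (t k) - q.1 (t k)‖ * ‖q.2‖).sum ≤ δ * Y := by
      calc (p.map fun q => ‖gC q.1 (t k) - q.1 (t k)‖ * ‖q.2‖).sum
          ≤ (p.map fun q => δ * ‖q.2‖).sum := by
            refine List.sum_le_sum fun q hq => ?_
            refine mul_le_mul_of_nonneg_right ?_ (norm_nonneg _)
            rw [norm_sub_rev]
            exact hfg q hq (t k)
      _ = δ * Y := by rw [list_sum_map_mul_left, ← hYdef]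
    exact le_trans h2 (add_le_add h3 h4)
  have hA2 : |∑ k, (p.map fun q => q.2 (S (B k) (gC q.1 (t k)))).sum|
      ≤ Vr * (epsNorm p + δ * Y) := by
    refine (Finset.abs_sum_le_sum_abs _ _).trans ?_
    refine (Finset.sum_le_sum fun k _ => hAk k).trans ?_
    rw [← Finset.sum_mul]
    exact mul_le_mul_of_nonneg_right hVsum
      (add_nonneg (epsNorm_nonneg p) (mul_nonneg hδ0.le hY0))
  -- putting everything together
  have htri : |(p.map fun q => q.2 (T q.1)).sum|
      ≤ ‖T‖ * Y * δ + η * M + Vr * (epsNorm p + δ * Y) := by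
    have hid : (p.map fun q => q.2 (T q.1)).sum
        = ((p.map fun q => q.2 (T q.1)).sum - (p.map fun q => q.2 (T (gC q.1))).sum)
          + ((p.map fun q => q.2 (T (gC q.1))).sum
            - (p.map fun q => ∑ j : {x // x ∈ s},
                ∑ k, w j (t k) * G (B k) (q.1 j.1) q.2).sum)
          + ∑ k, (p.map fun q => q.2 (S (B k) (gC q.1 (t k)))).sum := by
      rw [← hA2eq]
      ring
    rw [hid]
    refine (abs_add_le _ _).trans ?_
    refine add_le_add ((abs_add_le _ _).trans (add_le_add hA01 hA12)) ?_
    exact hA2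
  have hb1 : ‖T‖ * Y * δ + Vr * (δ * Y) ≤ ε / 2 := by
    have h := frac_helper (‖T‖ * Y + Vr * Y) ε (by linarith) hε
    calc ‖T‖ * Y * δ + Vr * (δ * Y) = (‖T‖ * Y + Vr * Y) * δ := by ring
    _ ≤ ε / 2 := by rw [hδdef]; exact h
  have hb2 : η * M ≤ ε / 2 := by
    have h := frac_helper M ε hM0 hε
    calc η * M = M * (ε / (2 * (M + 1))) := by rw [hηdef]; ring
    _ ≤ ε / 2 := h
  have hfinal : Vr * (epsNorm p + δ * Y) = Vr * epsNorm p + Vr * (δ * Y) := by ring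
  rw [hfinal] at htri
  linarith [htri, hb1, hb2]

end Paper
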